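/- arXiv:1906.10612 — 4 statements merged into one kernel-verified Lean document; each statement's English description precedes it below -/
import Mathlib

section
/- Let γ > 0 and ξ ∈ ℝ. The set of minimizers over w ∈ ℝ of the function w ↦ (1/2)(w − ξ)² + γ·𝟙[w ≠ 0] (where 𝟙[w ≠ 0] is 1 if w ≠ 0 and 0 if w = 0) is exactly {ξ} if |ξ| > √(2γ), exactly {0} if |ξ| < √(2γ), and exactly {0, ξ} if |ξ| = √(2γ). In other words, the proximal operator of the scaled ℓ0 penalty is hard thresholding at level √(2γ). -/
/-!
Away from `0` the objective is `(w - ξ)² / 2 + γ`, minimized only at `w = ξ` with value `γ`;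
at `0` it equals `ξ² / 2`. So the minimizers are read off from the comparison of `ξ² / 2` with
`γ`, i.e. of `|ξ|` with `√(2γ)`.
-/

namespace L0Prox

noncomputable def objective (γ ξ w : ℝ) : ℝ :=
  (1 / 2) * (w - ξ) ^ 2 + γ * (if w ≠ 0 then 1 else 0)

variable {γ ξ w : ℝ}

lemma objective_zero : objective γ ξ 0 = ξ ^ 2 / 2 := by
  rw [objective, if_neg (not_not.mpr rfl)]
  ring

lemma objective_of_ne_zero (hw : w ≠ 0) : objective γ ξ w = (w - ξ) ^ 2 / 2 + γ := by
  rw [objective, if_pos hw]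
  ring

lemma objective_self (hξ : ξ ≠ 0) : objective γ ξ ξ = γ := by
  simp [objective_of_ne_zero hξ]

lemma le_objective_of_ne_zero (hw : w ≠ 0) : γ ≤ objective γ ξ w := by
  rw [objective_of_ne_zero hw]
  nlinarith [sq_nonneg (w - ξ)]

lemma isMinimizer_iff (hγ : 0 ≤ γ) :
    (∀ v, objective γ ξ w ≤ objective γ ξ v) ↔
      (w = 0 ∧ ξ ^ 2 ≤ 2 * γ) ∨ (w = ξ ∧ 2 * γ ≤ ξ ^ 2) := by
  constructor
  · intro hmin
    rcases eq_or_ne w 0 with rfl | hw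
    · refine Or.inl ⟨rfl, ?_⟩
      rcases eq_or_ne ξ 0 with rfl | hξ
      · simpa using hγ
      · have at_self := hmin ξ
        rw [objective_zero, objective_self hξ] at at_self
        linarith
    · have hξ : ξ ≠ 0 := by
        rintro rfl
        have at_zero := hmin 0
        rw [objective_of_ne_zero hw, objective_zero] at at_zero
        nlinarith [sq_pos_of_ne_zero hw]
      have at_self := hmin ξ
      have at_zero := hmin 0
      rw [objective_of_ne_zero hw, objective_self hξ] at at_self
      rw [objective_of_ne_zero hw, objective_zero] at at_zero
      have hwξ : (w - ξ) ^ 2 = 0 := by nlinarith [sq_nonneg (w - ξ)]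
      exact Or.inr ⟨sub_eq_zero.mp (pow_eq_zero_iff two_ne_zero |>.mp hwξ),
        by nlinarith [sq_nonneg (w - ξ)]⟩
  · rintro (⟨rfl, hξ⟩ | ⟨rfl, hξ⟩) v
    · rcases eq_or_ne v 0 with rfl | hv
      · rfl
      · rw [objective_zero]
        linarith [le_objective_of_ne_zero (γ := γ) (ξ := ξ) hv]
    · rcases eq_or_ne w 0 with rfl | hw
      · rcases eq_or_ne v 0 with rfl | hv
        · rfl
        · rw [objective_zero]
          nlinarith [le_objective_of_ne_zero (γ := γ) (ξ := 0) hv]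
      · rw [objective_self hw]
        rcases eq_or_ne v 0 with rfl | hv
        · rw [objective_zero]
          linarith
        · exact le_objective_of_ne_zero hv

end L0Prox

/-- The proximal operator of the scaled ℓ0 penalty is hard thresholding at level √(2γ):
for γ > 0 and ξ ∈ ℝ, the set of minimizers of w ↦ (1/2)(w − ξ)² + γ·𝟙[w ≠ 0] is
{ξ} if |ξ| > √(2γ), {0} if |ξ| < √(2γ), and {0, ξ} if |ξ| = √(2γ). -/
theorem stmt0 (γ ξ : ℝ) (hγ : 0 < γ) :
    let f : ℝ → ℝ := fun w => (1 / 2) * (w - ξ) ^ 2 + γ * (if w ≠ 0 then 1 else 0)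
    (|ξ| > Real.sqrt (2 * γ) → {w : ℝ | ∀ v : ℝ, f w ≤ f v} = {ξ}) ∧
    (|ξ| < Real.sqrt (2 * γ) → {w : ℝ | ∀ v : ℝ, f w ≤ f v} = {0}) ∧
    (|ξ| = Real.sqrt (2 * γ) → {w : ℝ | ∀ v : ℝ, f w ≤ f v} = {0, ξ}) := by
  intro f
  have hc : 0 ≤ 2 * γ := by positivity
  have minimizers : {w : ℝ | ∀ v : ℝ, f w ≤ f v} =
      {w | (w = 0 ∧ ξ ^ 2 ≤ 2 * γ) ∨ (w = ξ ∧ 2 * γ ≤ ξ ^ 2)} :=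
    Set.ext fun w => L0Prox.isMinimizer_iff hγ.le
  rw [minimizers, ← Real.sqrt_sq_eq_abs, gt_iff_lt, Real.sqrt_lt_sqrt_iff hc,
    Real.sqrt_lt_sqrt_iff (sq_nonneg ξ), Real.sqrt_inj (sq_nonneg ξ) hc]
  refine ⟨fun h => ?_, fun h => ?_, fun h => ?_⟩
  · ext w; simp [h.le, h.not_ge]
  · ext w; simp [h.le, h.not_ge]
  · ext w; simp [h.le, h.ge, or_comm]
end

section
/- Let Θ be a real m × p matrix, Ẋ a real m × n matrix, ν > 0, λ > 0, and define F(Ξ, W) = (1/2)‖Ẋ − ΘΞ‖_F² + λ·‖W‖₀ + (1/(2ν))‖Ξ − W‖_F², where ‖W‖₀ counts the nonzero entries of W. Given any (Ξ, W), define Ξ⁺ as the unique minimizer of Ξ ↦ (1/2)‖Ẋ − ΘΞ‖_F² + (1/(2ν))‖Ξ − W‖_F², and define W⁺ entrywise by W⁺_{ij} = Ξ⁺_{ij} if |Ξ⁺_{ij}| ≥ √(2λν) and W⁺_{ij} = 0 otherwise. Then F(Ξ⁺, W⁺) ≤ F(Ξ⁺, W) ≤ F(Ξ, W): one full iteration of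 the SR3 alternating algorithm with ℓ0 regularization does not increase the objective. -/
open Matrix

lemma sr3_entry (lam ν x w : ℝ) (hν : 0 < ν) (hlam : 0 < lam) :
    (if (if Real.sqrt (2 * lam * ν) ≤ |x| then x else 0) ≠ 0 then lam else 0) +
      (1 / (2 * ν)) * (x - (if Real.sqrt (2 * lam * ν) ≤ |x| then x else 0)) ^ 2 ≤
    (if w ≠ 0 then lam else 0) + (1 / (2 * ν)) * (x - w) ^ 2 := by
  have hc : 0 < 1 / (2 * ν) := by positivity
  have hs : 0 < Real.sqrt (2 * lam * ν) := Real.sqrt_pos.mpr (by positivity)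
  have hsq : Real.sqrt (2 * lam * ν) ^ 2 = 2 * lam * ν := Real.sq_sqrt (by positivity)
  by_cases h : Real.sqrt (2 * lam * ν) ≤ |x|
  · have hx : x ≠ 0 := by
      intro h0; rw [h0, abs_zero] at h; linarith
    rw [if_pos h, if_pos hx, sub_self, zero_pow (by norm_num), mul_zero, add_zero]
    by_cases hw : w ≠ 0
    · rw [if_pos hw]
      nlinarith [sq_nonneg (x - w)]
    · push_neg at hw
      rw [hw, if_neg (by simp), sub_zero]
      have hx2 : 2 * lam * ν ≤ x ^ 2 := by
        calc 2 * lam * ν = Real.sqrt (2 * lam * ν) ^ 2 := hsq.symm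
        _ ≤ |x| ^ 2 := by nlinarith
        _ = x ^ 2 := sq_abs x
      have : lam ≤ 1 / (2 * ν) * x ^ 2 := by
        rw [div_mul_eq_mul_div, le_div_iff₀ (by positivity)]
        linarith
      linarith
  · rw [if_neg h, if_neg (by simp), sub_zero, zero_add]
    push_neg at h
    by_cases hw : w ≠ 0
    · rw [if_pos hw]
      have hx2 : x ^ 2 ≤ 2 * lam * ν := by
        calc x ^ 2 = |x| ^ 2 := (sq_abs x).symm
        _ ≤ Real.sqrt (2 * lam * ν) ^ 2 := by nlinarith [abs_nonneg x]
        _ = 2 * lam * ν := hsq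
      have h1 : 1 / (2 * ν) * x ^ 2 ≤ lam := by
        rw [div_mul_eq_mul_div, div_le_iff₀ (by positivity)]
        linarith
      nlinarith [sq_nonneg (x - w)]
    · push_neg at hw
      simp [hw]

/-- One full SR3 iteration with ℓ0 regularization does not increase the objective
F(Ξ, W) = (1/2)‖Ẋ − ΘΞ‖_F² + λ‖W‖₀ + (1/(2ν))‖Ξ − W‖_F²: if Ξ⁺ minimizes the
regularized least squares subproblem and W⁺ is the entrywise hard thresholding
of Ξ⁺ at level √(2λν), then F(Ξ⁺, W⁺) ≤ F(Ξ⁺, W) ≤ F(Ξ, W). -/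
theorem stmt10 (m p n : ℕ) (Θ : Matrix (Fin m) (Fin p) ℝ)
    (Xdot : Matrix (Fin m) (Fin n) ℝ) (ν lam : ℝ) (hν : 0 < ν) (hlam : 0 < lam)
    (Ξ W Ξplus Wplus : Matrix (Fin p) (Fin n) ℝ)
    -- squared Frobenius norm and ℓ0 (number of nonzero entries)
    (frob2 : ∀ {a b : ℕ}, Matrix (Fin a) (Fin b) ℝ → ℝ)
    (hfrob2 : ∀ {a b : ℕ} (A : Matrix (Fin a) (Fin b) ℝ),
      frob2 A = ∑ i, ∑ j, (A i j) ^ 2)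
    (l0 : Matrix (Fin p) (Fin n) ℝ → ℝ)
    (hl0 : ∀ A : Matrix (Fin p) (Fin n) ℝ,
      l0 A = ((Finset.univ.filter fun ij : Fin p × Fin n => A ij.1 ij.2 ≠ 0).card : ℝ))
    -- the objective
    (F : Matrix (Fin p) (Fin n) ℝ → Matrix (Fin p) (Fin n) ℝ → ℝ)
    (hF : ∀ A B, F A B =
      (1 / 2) * frob2 (Xdot - Θ * A) + lam * l0 B + (1 / (2 * ν)) * frob2 (A - B))
    -- Ξ⁺ minimizes the regularized least squares subproblem given W
    (hΞplus : ∀ A : Matrix (Fin p) (Fin n) ℝ,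
      (1 / 2) * frob2 (Xdot - Θ * Ξplus) + (1 / (2 * ν)) * frob2 (Ξplus - W) ≤
      (1 / 2) * frob2 (Xdot - Θ * A) + (1 / (2 * ν)) * frob2 (A - W))
    -- W⁺ is entrywise hard thresholding of Ξ⁺ at level √(2λν)
    (hWplus : ∀ i j, Wplus i j =
      if Real.sqrt (2 * lam * ν) ≤ |Ξplus i j| then Ξplus i j else 0) :
    F Ξplus Wplus ≤ F Ξplus W ∧ F Ξplus W ≤ F Ξ W := by
  have key : ∀ B : Matrix (Fin p) (Fin n) ℝ,
      lam * l0 B + (1 / (2 * ν)) * frob2 (Ξplus - B) =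
      ∑ ij : Fin p × Fin n, ((if B ij.1 ij.2 ≠ 0 then lam else 0) +
        (1 / (2 * ν)) * (Ξplus ij.1 ij.2 - B ij.1 ij.2) ^ 2) := by
    intro B
    rw [hl0, hfrob2, Finset.card_filter, Finset.sum_add_distrib]
    push_cast
    rw [Finset.mul_sum]
    congr 1
    · exact Finset.sum_congr rfl fun ij _ => by split <;> simp
    · rw [Fintype.sum_prod_type, Finset.mul_sum]
      refine Finset.sum_congr rfl fun i _ => ?_
      rw [Finset.mul_sum]
      exact Finset.sum_congr rfl fun j _ => by simp [Matrix.sub_apply]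
  constructor
  · rw [hF, hF]
    have h1 : lam * l0 Wplus + (1 / (2 * ν)) * frob2 (Ξplus - Wplus) ≤
        lam * l0 W + (1 / (2 * ν)) * frob2 (Ξplus - W) := by
      rw [key, key]
      apply Finset.sum_le_sum
      intro ij _
      rw [hWplus ij.1 ij.2]
      exact sr3_entry lam ν (Ξplus ij.1 ij.2) (W ij.1 ij.2) hν hlam
    linarith
  · rw [hF, hF]
    have := hΞplus Ξ
    linarith
end

section
/- Let Θ be a real m × p matrix, Y ∈ ℝᵐ, ν > 0, and let q(W) = min over ξ ∈ ℝᵖ of (1/2)‖Y − Θξ‖² + (1/(2ν))‖ξ − W‖². Then for all U, W ∈ ℝᵖ, q(U) ≤ q(W) + ⟨∇q(W), U − W⟩ + (1/(2ν))‖U − W‖², where ∇q(W) = (1/ν)(W − ξ*(W)) and ξ*(W) = (ΘᵀΘ + (1/ν)I)⁻¹(ΘᵀY + (1/ν)W). -/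
open Matrix
open scoped RealInnerProductSpace

/-!
For fixed `ξ`, the SR3 objective is an exact quadratic in `W` with Hessian `(1/ν) I`, so
evaluating it at `U` with `ξ` frozen at the minimizer `ξ*(W)` gives the right-hand side of the
descent inequality. Minimizing over `ξ` at `U` can only lower the value, while at `W` the
minimum is attained at `ξ*(W)`, which is exactly the solution of the normal equations
`(ΘᵀΘ + (1/ν) I) ξ = ΘᵀY + (1/ν) W`.
-/

section ProximalLeastSquares

variable {E F : Type*} [NormedAddCommGroup E] [InnerProductSpace ℝ E]
  [NormedAddCommGroup F] [InnerProductSpace ℝ F]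

noncomputable def sr3Objective (T : E →ₗ[ℝ] F) (Y : F) (ν : ℝ) (ξ W : E) : ℝ :=
  (1 / 2) * ‖Y - T ξ‖ ^ 2 + (1 / (2 * ν)) * ‖ξ - W‖ ^ 2

variable (T : E →ₗ[ℝ] F) (Y : F) {ν : ℝ}

lemma bddBelow_range_sr3Objective (hν : 0 ≤ ν) (W : E) :
    BddBelow (Set.range fun ξ => sr3Objective T Y ν ξ W) := by
  refine ⟨0, ?_⟩
  rintro _ ⟨ξ, rfl⟩
  unfold sr3Objective
  positivity

lemma sr3Objective_eq_add_inner_add_sq (ξ U W : E) :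
    sr3Objective T Y ν ξ U = sr3Objective T Y ν ξ W + ⟪(1 / ν) • (W - ξ), U - W⟫
      + (1 / (2 * ν)) * ‖U - W‖ ^ 2 := by
  have hexpand : ‖ξ - U‖ ^ 2 = ‖ξ - W‖ ^ 2 - 2 * ⟪ξ - W, U - W⟫ + ‖U - W‖ ^ 2 := by
    rw [show ξ - U = (ξ - W) - (U - W) by abel, norm_sub_sq_real]
  rw [sr3Objective, sr3Objective, hexpand, real_inner_smul_left, ← neg_sub ξ W, inner_neg_left]
  ring

lemma sr3Objective_eq_of_critical {ξs W : E}
    (hcrit : ∀ h, ⟪T ξs - Y, T h⟫ + (1 / ν) * ⟪ξs - W, h⟫ = 0) (ξ : E) :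
    sr3Objective T Y ν ξ W = sr3Objective T Y ν ξs W + (1 / 2) * ‖T (ξ - ξs)‖ ^ 2
      + (1 / (2 * ν)) * ‖ξ - ξs‖ ^ 2 := by
  have hfit : ‖Y - T ξ‖ ^ 2 = ‖Y - T ξs‖ ^ 2 - 2 * ⟪Y - T ξs, T (ξ - ξs)⟫ + ‖T (ξ - ξs)‖ ^ 2 := by
    rw [show Y - T ξ = (Y - T ξs) - T (ξ - ξs) by rw [map_sub]; abel, norm_sub_sq_real]
  have hprox : ‖ξ - W‖ ^ 2 = ‖ξs - W‖ ^ 2 + 2 * ⟪ξs - W, ξ - ξs⟫ + ‖ξ - ξs‖ ^ 2 := by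
    rw [show ξ - W = (ξs - W) + (ξ - ξs) by abel, norm_add_sq_real]
  have hcross := hcrit (ξ - ξs)
  rw [← neg_sub Y, inner_neg_left] at hcross
  rw [sr3Objective, sr3Objective, hfit, hprox]
  linear_combination hcross

lemma iInf_sr3Objective_eq_of_critical (hν : 0 ≤ ν) {ξs W : E}
    (hcrit : ∀ h, ⟪T ξs - Y, T h⟫ + (1 / ν) * ⟪ξs - W, h⟫ = 0) :
    ⨅ ξ, sr3Objective T Y ν ξ W = sr3Objective T Y ν ξs W := by
  refine le_antisymm (ciInf_le (bddBelow_range_sr3Objective T Y hν W) ξs) (le_ciInf fun ξ => ?_)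
  rw [sr3Objective_eq_of_critical T Y hcrit ξ, add_assoc]
  exact le_add_of_nonneg_right (by positivity)

theorem iInf_sr3Objective_le_of_critical (hν : 0 ≤ ν) {ξs W : E}
    (hcrit : ∀ h, ⟪T ξs - Y, T h⟫ + (1 / ν) * ⟪ξs - W, h⟫ = 0) (U : E) :
    ⨅ ξ, sr3Objective T Y ν ξ U ≤ (⨅ ξ, sr3Objective T Y ν ξ W)
      + ⟪(1 / ν) • (W - ξs), U - W⟫ + (1 / (2 * ν)) * ‖U - W‖ ^ 2 := by
  rw [iInf_sr3Objective_eq_of_critical T Y hν hcrit, ← sr3Objective_eq_add_inner_add_sq]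
  exact ciInf_le (bddBelow_range_sr3Objective T Y hν U) ξs

end ProximalLeastSquares

section NormalEquations

variable {m n : Type*} [Fintype m] [Fintype n] [DecidableEq n]

lemma posDef_transpose_mul_self_add_smul_one (Θ : Matrix m n ℝ) {c : ℝ} (hc : 0 < c) :
    (Θᵀ * Θ + c • (1 : Matrix n n ℝ)).PosDef := by
  refine PosDef.posSemidef_add ?_ ?_
  · simpa only [conjTranspose_eq_transpose_of_trivial] using posSemidef_conjTranspose_mul_self Θ
  · rw [smul_one_eq_diagonal]
    exact PosDef.diagonal fun _ => hc

lemma toEuclideanLin_apply_toEuclideanLin_nonsing_inv {𝕜 : Type*} [RCLike 𝕜] {A : Matrix n n 𝕜}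
    (hA : IsUnit A.det) (b : EuclideanSpace 𝕜 n) :
    toEuclideanLin A (toEuclideanLin A⁻¹ b) = b := by
  rw [← LinearMap.comp_apply, ← toLpLin_mul_same, mul_nonsing_inv A hA, toLpLin_one,
    LinearMap.id_apply]

variable [DecidableEq m]

lemma inner_toEuclideanLin_transpose (Θ : Matrix m n ℝ) (z : EuclideanSpace ℝ m)
    (h : EuclideanSpace ℝ n) :
    ⟪toEuclideanLin Θᵀ z, h⟫ = ⟪z, toEuclideanLin Θ h⟫ := by
  rw [← conjTranspose_eq_transpose_of_trivial, toEuclideanLin_conjTranspose_eq_adjoint,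
    LinearMap.adjoint_inner_left]

lemma toEuclideanLin_transpose_mul_self_add_smul_one_apply (Θ : Matrix m n ℝ) (c : ℝ)
    (x : EuclideanSpace ℝ n) :
    toEuclideanLin (Θᵀ * Θ + c • (1 : Matrix n n ℝ)) x
      = toEuclideanLin Θᵀ (toEuclideanLin Θ x) + c • x := by
  simp

lemma inner_residual_add_smul_inner_eq_zero_of_normalEquations (Θ : Matrix m n ℝ)
    (Y : EuclideanSpace ℝ m) (c : ℝ) {ξs W : EuclideanSpace ℝ n}
    (hsolve : toEuclideanLin (Θᵀ * Θ + c • (1 : Matrix n n ℝ)) ξs = toEuclideanLin Θᵀ Y + c • W)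
    (h : EuclideanSpace ℝ n) :
    ⟪toEuclideanLin Θ ξs - Y, toEuclideanLin Θ h⟫ + c * ⟪ξs - W, h⟫ = 0 := by
  rw [toEuclideanLin_transpose_mul_self_add_smul_one_apply] at hsolve
  have hresidual : toEuclideanLin Θᵀ (toEuclideanLin Θ ξs - Y) + c • (ξs - W) = 0 := by
    rw [map_sub, smul_sub, sub_add_sub_comm, hsolve, sub_self]
  rw [← inner_toEuclideanLin_transpose, ← real_inner_smul_left, ← inner_add_left, hresidual,
    inner_zero_left]

end NormalEquations

/-- Descent lemma (quadratic upper bound) for the partially minimized SR3 value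
function q(W) = min_ξ (1/2)‖Y − Θξ‖² + (1/(2ν))‖ξ − W‖²: for all U, W,
q(U) ≤ q(W) + ⟨∇q(W), U − W⟩ + (1/(2ν))‖U − W‖², where
∇q(W) = (1/ν)(W − ξ*(W)) and ξ*(W) = (ΘᵀΘ + (1/ν)I)⁻¹(ΘᵀY + (1/ν)W). -/
theorem stmt12 (m p : ℕ) (Θ : Matrix (Fin m) (Fin p) ℝ)
    (Y : EuclideanSpace ℝ (Fin m)) (ν : ℝ) (hν : 0 < ν) :
    let q : EuclideanSpace ℝ (Fin p) → ℝ := fun W =>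
      ⨅ ξ : EuclideanSpace ℝ (Fin p),
        ((1 / 2) * ‖Y - Matrix.toEuclideanLin Θ ξ‖ ^ 2 + (1 / (2 * ν)) * ‖ξ - W‖ ^ 2)
    let ξstar : EuclideanSpace ℝ (Fin p) → EuclideanSpace ℝ (Fin p) := fun W =>
      Matrix.toEuclideanLin ((Θᵀ * Θ + (1 / ν) • (1 : Matrix (Fin p) (Fin p) ℝ))⁻¹)
        (Matrix.toEuclideanLin Θᵀ Y + (1 / ν) • W)
    ∀ U W : EuclideanSpace ℝ (Fin p),
      q U ≤ q W + ⟪(1 / ν) • (W - ξstar W), U - W⟫ + (1 / (2 * ν)) * ‖U - W‖ ^ 2 := by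
  intro q ξstar U W
  have hA := posDef_transpose_mul_self_add_smul_one Θ (one_div_pos.mpr hν)
  have hsolve := toEuclideanLin_apply_toEuclideanLin_nonsing_inv hA.det_pos.ne'.isUnit
    (toEuclideanLin Θᵀ Y + (1 / ν) • W)
  exact iInf_sr3Objective_le_of_critical (toEuclideanLin Θ) Y hν.le
    (inner_residual_add_smul_inner_eq_zero_of_normalEquations Θ Y (1 / ν) hsolve) U
end

section
/- Let Θ be a real m × p matrix, Y ∈ ℝᵐ, ν > 0, λ > 0, and let R : ℝᵖ → ℝ be convex. Define q(W) = min over ξ ∈ ℝᵖ of (1/2)‖Y − Θξ‖² + (1/(2ν))‖ξ − W‖², p(W) = q(W) + λR(W), and suppose p is bounded below with infimum p*. Let ξ*(W) = (ΘᵀΘ + (1/ν)I)⁻¹(ΘᵀY + (1/ν)W), and consider the SR3 iterates W⁰, W¹, W², ..., where Wᵏ minimizes w ↦ λR(w) + (1/(2ν))‖w − ξ*(Wᵏ⁻¹)‖² (i.e., Wᵏ = prox_{λνR}(ξ*(Wᵏ⁻¹))). Define the gradient mapping Gᵏ = (Wᵏ⁻¹ − Wᵏ)/ν. Then for every N ≥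 1, (1/N)·Σ_{k=1}^{N} ‖Gᵏ‖² ≤ (2/(νN))·(p(W⁰) − p*). In particular, min_{1≤k≤N} ‖Gᵏ‖² → 0 at a sublinear O(1/N) rate. -/
/-!
SR3 is the proximal gradient method for `P = q + λR`. The ridge minimizer `ξ*(Wᵏ)` attains
`q(Wᵏ)` and, used as a competitor, bounds `q(Wᵏ⁺¹)` from above. Since `λR + ‖· - ξ‖²/(2ν)` is
`1/ν`-strongly convex, its minimizer `Wᵏ⁺¹` beats `Wᵏ` by `‖Wᵏ - Wᵏ⁺¹‖²/(2ν)`. Adding the two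
gives the sufficient decrease `P(Wᵏ⁺¹) + ‖Wᵏ - Wᵏ⁺¹‖²/(2ν) ≤ P(Wᵏ)`, which telescopes against
`P ≥ P*`.
-/

open Matrix Filter Topology Set

section Convex

variable {E : Type*} [NormedAddCommGroup E] [InnerProductSpace ℝ E]

lemma StrongConvexOn.add_mul_norm_sub_sq_le_of_isMinOn {s : Set E} {m : ℝ} {f : E → ℝ}
    {x y : E} (hf : StrongConvexOn s m f) (hmin : IsMinOn f s x) (hx : x ∈ s) (hy : y ∈ s) :
    f x + m / 2 * ‖y - x‖ ^ 2 ≤ f y := by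
  have hsegment : ∀ t ∈ Ioc (0 : ℝ) 1, f x + (1 - t) * (m / 2 * ‖y - x‖ ^ 2) ≤ f y := by
    rintro t ⟨ht0, ht1⟩
    have hconv := hf.2 hx hy (sub_nonneg.2 ht1) ht0.le (sub_add_cancel 1 t)
    have hle : f x ≤ f ((1 - t) • x + t • y) :=
      hmin (hf.1 hx hy (sub_nonneg.2 ht1) ht0.le (sub_add_cancel 1 t))
    rw [norm_sub_rev] at hconv
    simp only [smul_eq_mul] at hconv
    nlinarith
  have hlim : Tendsto (fun t : ℝ => f x + (1 - t) * (m / 2 * ‖y - x‖ ^ 2)) (𝓝[>] 0)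
      (𝓝 (f x + m / 2 * ‖y - x‖ ^ 2)) :=
    tendsto_nhdsWithin_of_tendsto_nhds <| (by fun_prop : Continuous _).tendsto' 0 _ (by simp)
  exact le_of_tendsto hlim (eventually_of_mem (Ioc_mem_nhdsGT one_pos) hsegment)

lemma ConvexOn.strongConvexOn_add_mul_norm_sub_sq {s : Set E} {h : E → ℝ}
    (hh : ConvexOn ℝ s h) (c : ℝ) (ξ : E) :
    StrongConvexOn s (2 * c) (fun w => h w + c * ‖w - ξ‖ ^ 2) := by
  rw [strongConvexOn_iff_convex]
  refine (hh.add ((((-(2 * c)) • innerₗ E ξ).convexOn hh.1).add_const (c * ‖ξ‖ ^ 2))).congr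
    fun w _ => ?_
  simp only [Pi.add_apply, LinearMap.smul_apply, innerₗ_apply_apply, smul_eq_mul, norm_sub_sq_real,
    real_inner_comm ξ w]
  ring

lemma ConvexOn.add_mul_norm_sub_sq_le_of_isMinOn {h : E → ℝ} (hh : ConvexOn ℝ univ h) {c : ℝ}
    {ξ x : E} (hx : IsMinOn (fun w => h w + c * ‖w - ξ‖ ^ 2) univ x) (w : E) :
    h x + c * ‖x - ξ‖ ^ 2 + c * ‖w - x‖ ^ 2 ≤ h w + c * ‖w - ξ‖ ^ 2 := by
  simpa using (hh.strongConvexOn_add_mul_norm_sub_sq c ξ).add_mul_norm_sub_sq_le_of_isMinOn hx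
    (mem_univ x) (mem_univ w)

end Convex

lemma sum_range_le_sub_of_add_le {α : Type*} [AddCommGroup α] [PartialOrder α]
    [IsOrderedAddMonoid α] {a d : ℕ → α} (h : ∀ k, a (k + 1) + d k ≤ a k) (n : ℕ) :
    ∑ k ∈ Finset.range n, d k ≤ a 0 - a n := by
  rw [← Finset.sum_range_sub']
  exact Finset.sum_le_sum fun k _ => le_sub_iff_add_le'.2 (h k)

lemma Matrix.ridge_normal_equation {m n : Type*} [Fintype m] [Fintype n] [DecidableEq n]
    (Θ : Matrix m n ℝ) {c : ℝ} (hc : 0 < c) (b : EuclideanSpace ℝ n) :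
    (toEuclideanLin Θ).adjoint (toEuclideanLin Θ (toEuclideanLin (Θᵀ * Θ + c • 1)⁻¹ b)) +
      c • toEuclideanLin (Θᵀ * Θ + c • 1)⁻¹ b = b := by
  classical
  have hpos : (Θᵀ * Θ + c • 1).PosDef := by
    rw [← conjTranspose_eq_transpose_of_trivial]
    exact PosDef.posSemidef_add (posSemidef_conjTranspose_mul_self Θ) (PosDef.one.smul hc)
  have hinv : (Θᵀ * Θ + c • 1) * (Θᵀ * Θ + c • 1)⁻¹ = 1 :=
    mul_nonsing_inv _ ((isUnit_iff_isUnit_det _).1 hpos.isUnit)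
  have happly := congrArg (fun M => toEuclideanLin M b) hinv
  simp only [toLpLin_mul_same, toLpLin_one, map_add, map_smul, LinearMap.comp_apply,
    LinearMap.add_apply, LinearMap.smul_apply, LinearMap.id_apply] at happly
  rwa [← conjTranspose_eq_transpose_of_trivial, toEuclideanLin_conjTranspose_eq_adjoint] at happly

section SR3

variable {E F : Type*} [NormedAddCommGroup E] [InnerProductSpace ℝ E] [FiniteDimensional ℝ E]
  [NormedAddCommGroup F] [InnerProductSpace ℝ F] [FiniteDimensional ℝ F]
  (T : E →ₗ[ℝ] F) (Y : F) {ν : ℝ}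

noncomputable def ridgeObjective (ν : ℝ) (W ξ : E) : ℝ :=
  1 / 2 * ‖Y - T ξ‖ ^ 2 + 1 / (2 * ν) * ‖ξ - W‖ ^ 2

lemma isMinOn_ridgeObjective (hν : 0 < ν) {W ξ₀ : E}
    (hcrit : T.adjoint (T ξ₀) + (1 / ν) • ξ₀ = T.adjoint Y + (1 / ν) • W) :
    IsMinOn (ridgeObjective T Y ν W) univ ξ₀ := by
  refine isMinOn_univ_iff.2 fun ξ => ?_
  obtain ⟨d, rfl⟩ : ∃ d, ξ = ξ₀ + d := ⟨ξ - ξ₀, by abel⟩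
  have hgrad : T.adjoint (Y - T ξ₀) = (1 / ν) • (ξ₀ - W) := by
    rw [map_sub, smul_sub]
    linear_combination (norm := module) -hcrit
  have hcross : inner ℝ (Y - T ξ₀) (T d) = 1 / ν * inner ℝ (ξ₀ - W) d := by
    rw [← LinearMap.adjoint_inner_left, hgrad, real_inner_smul_left]
  have hY : Y - T (ξ₀ + d) = (Y - T ξ₀) - T d := by rw [map_add]; abel
  have hW : ξ₀ + d - W = (ξ₀ - W) + d := by abel
  rw [ridgeObjective, ridgeObjective, hY, hW, norm_sub_sq_real (Y - T ξ₀),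
    norm_add_sq_real (ξ₀ - W), hcross]
  have hsplit : 1 / (2 * ν) * 2 = 1 / ν := by field_simp
  have hd : 0 ≤ 1 / (2 * ν) * ‖d‖ ^ 2 := by positivity
  linarith [sq_nonneg ‖T d‖, congrArg (· * inner ℝ (ξ₀ - W) d) hsplit]

lemma iInf_ridgeObjective_eq (hν : 0 < ν) {W ξ₀ : E}
    (hcrit : T.adjoint (T ξ₀) + (1 / ν) • ξ₀ = T.adjoint Y + (1 / ν) • W) :
    ⨅ ξ, ridgeObjective T Y ν W ξ = ridgeObjective T Y ν W ξ₀ :=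
  (IsLeast.isGLB ⟨mem_range_self ξ₀,
    forall_mem_range.2 (isMinOn_univ_iff.1 (isMinOn_ridgeObjective T Y hν hcrit))⟩).ciInf_eq

lemma sr3_sufficient_decrease (hν : 0 < ν) {h : E → ℝ} (hh : ConvexOn ℝ univ h) {W W' ξ : E}
    (hcrit : T.adjoint (T ξ) + (1 / ν) • ξ = T.adjoint Y + (1 / ν) • W)
    (hW' : IsMinOn (fun w => h w + 1 / (2 * ν) * ‖w - ξ‖ ^ 2) univ W') :
    (⨅ ξ, ridgeObjective T Y ν W' ξ) + h W' + 1 / (2 * ν) * ‖W - W'‖ ^ 2 ≤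
      (⨅ ξ, ridgeObjective T Y ν W ξ) + h W := by
  have hbdd : BddBelow (range (ridgeObjective T Y ν W')) :=
    ⟨0, forall_mem_range.2 fun ξ => by unfold ridgeObjective; positivity⟩
  have hle : ⨅ ξ', ridgeObjective T Y ν W' ξ' ≤ ridgeObjective T Y ν W' ξ := ciInf_le hbdd ξ
  have hprox := hh.add_mul_norm_sub_sq_le_of_isMinOn hW' W
  have heq := iInf_ridgeObjective_eq T Y hν hcrit
  simp only [ridgeObjective, norm_sub_rev ξ] at hle heq hprox ⊢
  linarith

end SR3

/-- Sublinear convergence of the SR3 proximal gradient iteration: with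
q(W) = min_ξ (1/2)‖Y − Θξ‖² + (1/(2ν))‖ξ − W‖², P(W) = q(W) + λR(W) bounded
below with infimum P*, ξ*(W) = (ΘᵀΘ + (1/ν)I)⁻¹(ΘᵀY + (1/ν)W), and iterates
Wᵏ⁺¹ = prox_{λνR}(ξ*(Wᵏ)), the gradient mappings Gᵏ⁺¹ = (Wᵏ − Wᵏ⁺¹)/ν satisfy
(1/N)·Σ_{k<N} ‖Gᵏ⁺¹‖² ≤ (2/(νN))·(P(W⁰) − P*) for every N ≥ 1. -/
theorem stmt13 (m p : ℕ) (Θ : Matrix (Fin m) (Fin p) ℝ)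
    (Y : EuclideanSpace ℝ (Fin m)) (ν lam : ℝ) (hν : 0 < ν) (hlam : 0 < lam)
    (R : EuclideanSpace ℝ (Fin p) → ℝ) (hR : ConvexOn ℝ Set.univ R)
    (q P : EuclideanSpace ℝ (Fin p) → ℝ)
    (hq : ∀ W, q W = ⨅ ξ : EuclideanSpace ℝ (Fin p),
      ((1 / 2) * ‖Y - Matrix.toEuclideanLin Θ ξ‖ ^ 2 + (1 / (2 * ν)) * ‖ξ - W‖ ^ 2))
    (hP : ∀ W, P W = q W + lam * R W)
    (Pstar : ℝ) (hPstar : IsGLB (Set.range P) Pstar)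
    (ξstar : EuclideanSpace ℝ (Fin p) → EuclideanSpace ℝ (Fin p))
    (hξstar : ∀ W, ξstar W =
      Matrix.toEuclideanLin ((Θᵀ * Θ + (1 / ν) • (1 : Matrix (Fin p) (Fin p) ℝ))⁻¹)
        (Matrix.toEuclideanLin Θᵀ Y + (1 / ν) • W))
    (W : ℕ → EuclideanSpace ℝ (Fin p))
    -- Wᵏ⁺¹ minimizes w ↦ λR(w) + (1/(2ν))‖w − ξ*(Wᵏ)‖², i.e. Wᵏ⁺¹ = prox_{λνR}(ξ*(Wᵏ))
    (hW : ∀ k : ℕ, ∀ w : EuclideanSpace ℝ (Fin p),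
      lam * R (W (k + 1)) + (1 / (2 * ν)) * ‖W (k + 1) - ξstar (W k)‖ ^ 2 ≤
      lam * R w + (1 / (2 * ν)) * ‖w - ξstar (W k)‖ ^ 2) :
    ∀ N : ℕ, 1 ≤ N →
      (1 / (N : ℝ)) * ∑ k ∈ Finset.range N, ‖(1 / ν) • (W k - W (k + 1))‖ ^ 2 ≤
        (2 / (ν * N)) * (P (W 0) - Pstar) := by
  intro N hN
  set T := toEuclideanLin Θ
  have hcrit : ∀ V, T.adjoint (T (ξstar V)) + (1 / ν) • ξstar V = T.adjoint Y + (1 / ν) • V := by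
    intro V
    rw [hξstar, ← conjTranspose_eq_transpose_of_trivial, toEuclideanLin_conjTranspose_eq_adjoint]
    exact ridge_normal_equation Θ (one_div_pos.2 hν) _
  have hlamR : ConvexOn ℝ univ fun w => lam * R w := hR.smul hlam.le
  have hdecrease : ∀ k, P (W (k + 1)) + 1 / (2 * ν) * ‖W k - W (k + 1)‖ ^ 2 ≤ P (W k) := by
    intro k
    have hstep := sr3_sufficient_decrease T Y hν hlamR (hcrit (W k)) (isMinOn_univ_iff.2 (hW k))
    rw [hP, hP, hq, hq]
    exact hstep
  have hsum := sum_range_le_sub_of_add_le (a := fun k => P (W k)) hdecrease N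
  have hlow : Pstar ≤ P (W N) := hPstar.1 ⟨W N, rfl⟩
  have hN' : (0 : ℝ) < N := by exact_mod_cast hN
  simp only [norm_smul, mul_pow, ← Finset.mul_sum, Real.norm_eq_abs, sq_abs] at hsum ⊢
  calc 1 / (N : ℝ) * ((1 / ν) ^ 2 * ∑ k ∈ Finset.range N, ‖W k - W (k + 1)‖ ^ 2)
      = 2 / (ν * N) * (1 / (2 * ν) * ∑ k ∈ Finset.range N, ‖W k - W (k + 1)‖ ^ 2) := by
        field_simp
    _ ≤ 2 / (ν * N) * (P (W 0) - Pstar) := by gcongr; linarith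
end
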